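/- arXiv:1206.3898 — 5 statements merged into one kernel-verified Lean document; each statement's English description precedes it below -/
import Mathlib

section
/- Let 0 ≤ s < 1/2. Then sup over integers ξ, ξ₁ with ξ ξ₁ (ξ - ξ₁) ≠ 0 of ⟨ξ₁⟩^s ⟨ξ-ξ₁⟩^s / (|ξ₁| |ξ-ξ₁|^s ⟨ξ⟩^s) is finite, where ⟨x⟩ := 1 + |x|. -/
/-!
With `a = |ξ₁| ≥ 1` and `b = |ξ - ξ₁| ≥ 1` we have `⟨ξ₁⟩ ≤ 2a` and `⟨ξ - ξ₁⟩ ≤ 2b`, so the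
numerator is at most `4^s a^s b^s ≤ 4^s a b^s` because `s ≤ 1`; the remaining factor `⟨ξ⟩^s` of
the denominator is at least `1`. Hence the supremum is at most `4^s`.
-/

noncomputable def jap (x : ℝ) : ℝ := 1 + |x|

lemma one_le_jap (x : ℝ) : 1 ≤ jap x := by
  simp [jap]

lemma jap_pos (x : ℝ) : 0 < jap x :=
  zero_lt_one.trans_le (one_le_jap x)

lemma jap_le_two_mul_abs {x : ℝ} (hx : 1 ≤ |x|) : jap x ≤ 2 * |x| := by
  rw [jap]
  linarith

lemma one_le_abs_intCast {n : ℤ} (hn : n ≠ 0) : (1 : ℝ) ≤ |(n : ℝ)| := by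
  exact_mod_cast Int.one_le_abs hn

lemma jap_rpow_mul_jap_rpow_le {x y s : ℝ} (hx : 1 ≤ |x|) (hy : 1 ≤ |y|) (hs0 : 0 ≤ s)
    (hs1 : s ≤ 1) : jap x ^ s * jap y ^ s ≤ 4 ^ s * (|x| * |y| ^ s) := by
  have hxs : |x| ^ s ≤ |x| := Real.rpow_le_self_of_one_le hx hs1
  calc jap x ^ s * jap y ^ s
      ≤ (2 * |x|) ^ s * (2 * |y|) ^ s :=
        mul_le_mul (Real.rpow_le_rpow (jap_pos x).le (jap_le_two_mul_abs hx) hs0)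
          (Real.rpow_le_rpow (jap_pos y).le (jap_le_two_mul_abs hy) hs0)
          (Real.rpow_nonneg (jap_pos y).le s) (by positivity)
    _ = 4 ^ s * (|x| ^ s * |y| ^ s) := by
        rw [Real.mul_rpow zero_le_two (abs_nonneg x), Real.mul_rpow zero_le_two (abs_nonneg y),
          show (4 : ℝ) = 2 * 2 by norm_num, Real.mul_rpow zero_le_two zero_le_two]
        ring
    _ ≤ 4 ^ s * (|x| * |y| ^ s) := by gcongr

theorem bilinear_multiplier_bound_X
    (s : ℝ) (hs0 : 0 ≤ s) (hs : s < 1 / 2) :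
    ∃ C : ℝ, ∀ ξ ξ₁ : ℤ, ξ * ξ₁ * (ξ - ξ₁) ≠ 0 →
      jap (ξ₁ : ℝ) ^ s * jap ((ξ : ℝ) - (ξ₁ : ℝ)) ^ s /
        (|(ξ₁ : ℝ)| * |(ξ : ℝ) - (ξ₁ : ℝ)| ^ s * jap (ξ : ℝ) ^ s) ≤ C := by
  refine ⟨4 ^ s, fun ξ ξ₁ h => ?_⟩
  rw [mul_ne_zero_iff, mul_ne_zero_iff] at h
  obtain ⟨⟨-, hξ₁⟩, hdiff⟩ := h
  have hx : 1 ≤ |(ξ₁ : ℝ)| := one_le_abs_intCast hξ₁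
  have hy : 1 ≤ |(ξ : ℝ) - ξ₁| := by exact_mod_cast one_le_abs_intCast hdiff
  have hjap : 1 ≤ jap (ξ : ℝ) ^ s := Real.one_le_rpow (one_le_jap _) hs0
  rw [div_le_iff₀ (by positivity)]
  calc jap (ξ₁ : ℝ) ^ s * jap ((ξ : ℝ) - ξ₁) ^ s
      ≤ 4 ^ s * (|(ξ₁ : ℝ)| * |(ξ : ℝ) - ξ₁| ^ s) :=
        jap_rpow_mul_jap_rpow_le hx hy hs0 (by linarith)
    _ ≤ 4 ^ s * (|(ξ₁ : ℝ)| * |(ξ : ℝ) - ξ₁| ^ s * jap (ξ : ℝ) ^ s) :=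
        mul_le_mul_of_nonneg_left (le_mul_of_one_le_right (by positivity) hjap) (by positivity)
end

section
/- Let ξ₁, ξ₂, ξ₃ be nonzero integers with (ξ₁+ξ₂)(ξ₂+ξ₃)(ξ₃+ξ₁) ≠ 0, ξ := ξ₁+ξ₂+ξ₃, and suppose |ξ| is comparable to |ξ₁| and |ξ₁| ≫ |ξ₃| (say |ξ₁| ≥ 4|ξ₃| and |ξ| ≥ |ξ₁|/2). Then |ξ₁+ξ₂| · |ξ₂+ξ₃| · |ξ₃+ξ₁| ≥ c |ξ₁|² · min(|ξ₁+ξ₂|, |ξ₂+ξ₃|) for an absolute constant c > 0. -/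
/-!
With `A = |ξ₁|`, the hypotheses pin two of the three factors at size `A`: since `|ξ₃| ≤ A/4`,
`|ξ₃ + ξ₁| ≥ 3A/4`, and `|ξ₁ + ξ₂| = |ξ - ξ₃| ≥ |ξ| - A/4` is of size `A` as well. The remaining
factor `|ξ₂ + ξ₃|` is at least `min (|ξ₁ + ξ₂|, |ξ₂ + ξ₃|)`.
-/

lemma mul_sq_mul_min_le_mul_mul {R : Type*} [CommSemiring R] [LinearOrder R]
    [IsOrderedRing R] {α β A a b d : R} (hα : 0 ≤ α) (hβ : 0 ≤ β) (hA : 0 ≤ A) (hb : 0 ≤ b)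
    (ha : α * A ≤ a) (hd : β * A ≤ d) :
    α * β * A ^ 2 * min a b ≤ a * b * d := by
  have hαA : 0 ≤ α * A := by positivity
  have hβA : 0 ≤ β * A := by positivity
  have had : α * A * (β * A) ≤ a * d := mul_le_mul ha hd hβA (hαA.trans ha)
  calc α * β * A ^ 2 * min a b = α * A * (β * A) * min a b := by ring
    _ ≤ a * d * b := mul_le_mul had (min_le_right a b) (le_min (hαA.trans ha) hb)
        ((mul_nonneg hαA hβA).trans had)
    _ = a * b * d := by ring

/-- `|ξ₁| / 2` is floor division, so only `|ξ₁| ≤ 2 |ξ₁ + ξ₂ + ξ₃| + 1` is known; `ξ₃ ≠ 0` forces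
`|ξ₁| ≥ 4`, which lets the constant `1/8` (rather than `1/4`) absorb the lost `1/2`. -/
lemma abs_le_eight_mul_abs_add_of_abs_sum_ge {ξ₁ ξ₂ ξ₃ : ℤ} (h₃ : ξ₃ ≠ 0)
    (hbig : |ξ₁| ≥ 4 * |ξ₃|) (hcomp : |ξ₁ + ξ₂ + ξ₃| ≥ |ξ₁| / 2) :
    |ξ₁| ≤ 8 * |ξ₁ + ξ₂| := by
  simp only [Int.abs_eq_natAbs] at *
  omega

lemma three_mul_abs_le_four_mul_abs_add {ξ₁ ξ₃ : ℤ} (hbig : |ξ₁| ≥ 4 * |ξ₃|) :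
    3 * |ξ₁| ≤ 4 * |ξ₃ + ξ₁| := by
  simp only [Int.abs_eq_natAbs] at *
  omega

theorem nonresonance_gain_square
    : ∃ c : ℝ, 0 < c ∧ ∀ ξ₁ ξ₂ ξ₃ : ℤ, ξ₁ ≠ 0 → ξ₂ ≠ 0 → ξ₃ ≠ 0 →
      (ξ₁ + ξ₂) * (ξ₂ + ξ₃) * (ξ₃ + ξ₁) ≠ 0 →
      |ξ₁| ≥ 4 * |ξ₃| → |ξ₁ + ξ₂ + ξ₃| ≥ |ξ₁| / 2 →
      (|(ξ₁ : ℝ) + ξ₂| * |(ξ₂ : ℝ) + ξ₃| * |(ξ₃ : ℝ) + ξ₁| : ℝ) ≥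
        c * |(ξ₁ : ℝ)| ^ 2 * min |(ξ₁ : ℝ) + ξ₂| |(ξ₂ : ℝ) + ξ₃| := by
  refine ⟨1 / 8 * (3 / 4), by norm_num, fun ξ₁ ξ₂ ξ₃ _ _ h₃ _ hbig hcomp => ?_⟩
  have h₁₂ : |(ξ₁ : ℝ)| ≤ 8 * |(ξ₁ : ℝ) + ξ₂| := by
    exact_mod_cast abs_le_eight_mul_abs_add_of_abs_sum_ge h₃ hbig hcomp
  have h₃₁ : 3 * |(ξ₁ : ℝ)| ≤ 4 * |(ξ₃ : ℝ) + ξ₁| := by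
    exact_mod_cast three_mul_abs_le_four_mul_abs_add hbig
  exact mul_sq_mul_min_le_mul_mul (by norm_num) (by norm_num) (abs_nonneg _) (abs_nonneg _)
    (by linarith) (by linarith)
end

section
/- Let s ≥ 0, t ∈ ℝ, u₀ ∈ H^{-s}(T) with û₀(0) = 0, and v ∈ H^α(T) for some α ∈ ℝ. Define the phase-shifted function Sv by (Sv)^(ξ) = exp(-2i t |û₀(ξ)|²/ξ) v̂(ξ) for ξ ≠ 0 and (Sv)^(0) = v̂(0). Then ‖Sv − v‖_{H^{α+1−2s}} ≤ C |t| ‖u₀‖²_{H^{-s}} ‖v‖_{H^α} for an absolute constant C. -/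
/-- Sobolev `H^σ` norm of a Fourier coefficient sequence on the circle. -/
noncomputable def Hnorm (σ : ℝ) (a : ℤ → ℂ) : ℝ :=
  Real.sqrt (∑' ξ : ℤ, jap (ξ : ℝ) ^ (2 * σ) * ‖a ξ‖ ^ 2)

/-!
Since `|e^{iθ} - 1| ≤ |θ|`, the multiplier of `Sv - v` at a frequency `ξ ≠ 0` is at most
`2|t| |û₀(ξ)|² / |ξ|`. A single coefficient is controlled by the whole norm,
`|û₀(ξ)|² ≤ ⟨ξ⟩^{2s} ‖u₀‖²_{H^{-s}}`, and `1/|ξ| ≤ 2/⟨ξ⟩`, so the multiplier is at most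
`4|t| ‖u₀‖²_{H^{-s}} ⟨ξ⟩^{2s-1}`; this loss of `2s - 1` derivatives is exactly the shift from
`H^α` to `H^{α+1-2s}`.
-/

/-- The resonant phase shift `S` acting on Fourier coefficients. -/
noncomputable def phaseShift (t : ℝ) (u₀ v : ℤ → ℂ) (ξ : ℤ) : ℂ :=
  if ξ = 0 then v 0
  else Complex.exp (-2 * Complex.I * t * (‖u₀ ξ‖ ^ 2 : ℝ) / (ξ : ℂ)) * v ξ

lemma jap_le_two_mul_abs_intCast {ξ : ℤ} (hξ : ξ ≠ 0) : jap ξ ≤ 2 * |(ξ : ℝ)| := by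
  have : (1 : ℝ) ≤ |(ξ : ℝ)| := by
    rw [← Int.cast_abs]; exact_mod_cast Int.one_le_abs hξ
  unfold jap; linarith

lemma jap_rpow_two_mul (x σ : ℝ) : jap x ^ (2 * σ) = (jap x ^ σ) ^ 2 := by
  rw [mul_comm, Real.rpow_mul (jap_pos x).le, Real.rpow_two]

lemma jap_rpow_mul_sq_norm_le_Hnorm_sq {σ : ℝ} {a : ℤ → ℂ}
    (ha : Summable fun ξ : ℤ => jap (ξ : ℝ) ^ (2 * σ) * ‖a ξ‖ ^ 2) (ξ : ℤ) :
    jap ξ ^ (2 * σ) * ‖a ξ‖ ^ 2 ≤ Hnorm σ a ^ 2 := by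
  have hnonneg : ∀ η : ℤ, 0 ≤ jap (η : ℝ) ^ (2 * σ) * ‖a η‖ ^ 2 := fun η =>
    mul_nonneg (Real.rpow_nonneg (jap_pos _).le _) (sq_nonneg _)
  rw [Hnorm, Real.sq_sqrt (tsum_nonneg hnonneg)]
  exact ha.le_tsum ξ fun η _ => hnonneg η

lemma Hnorm_le_mul_Hnorm {σ τ K : ℝ} {a b : ℤ → ℂ} (hK : 0 ≤ K)
    (ha : Summable fun ξ : ℤ => jap (ξ : ℝ) ^ (2 * τ) * ‖a ξ‖ ^ 2)
    (h : ∀ ξ : ℤ, jap ξ ^ σ * ‖b ξ‖ ≤ K * (jap ξ ^ τ * ‖a ξ‖)) :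
    Hnorm σ b ≤ K * Hnorm τ a := by
  have hsq : ∀ ξ : ℤ, jap (ξ : ℝ) ^ (2 * σ) * ‖b ξ‖ ^ 2
      ≤ K ^ 2 * (jap (ξ : ℝ) ^ (2 * τ) * ‖a ξ‖ ^ 2) := fun ξ => by
    rw [jap_rpow_two_mul, jap_rpow_two_mul, ← mul_pow, ← mul_pow, ← mul_pow]
    exact pow_le_pow_left₀ (mul_nonneg (Real.rpow_nonneg (jap_pos _).le _) (norm_nonneg _))
      (h ξ) 2
  have hsum : ∑' ξ : ℤ, jap (ξ : ℝ) ^ (2 * σ) * ‖b ξ‖ ^ 2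
      ≤ K ^ 2 * ∑' ξ : ℤ, jap (ξ : ℝ) ^ (2 * τ) * ‖a ξ‖ ^ 2 := by
    rw [← tsum_mul_left]
    refine Summable.tsum_le_tsum hsq ?_ (ha.mul_left _)
    exact (ha.mul_left _).of_nonneg_of_le
      (fun ξ => mul_nonneg (Real.rpow_nonneg (jap_pos _).le _) (sq_nonneg _)) hsq
  calc Hnorm σ b ≤ Real.sqrt (K ^ 2 * ∑' ξ : ℤ, jap (ξ : ℝ) ^ (2 * τ) * ‖a ξ‖ ^ 2) :=
        Real.sqrt_le_sqrt hsum
    _ = K * Hnorm τ a := by rw [Real.sqrt_mul (sq_nonneg K), Real.sqrt_sq hK, Hnorm]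

lemma norm_phaseShift_sub_le (t : ℝ) (u₀ v : ℤ → ℂ) {ξ : ℤ} (hξ : ξ ≠ 0) :
    ‖phaseShift t u₀ v ξ - v ξ‖ ≤ 2 * |t| * ‖u₀ ξ‖ ^ 2 / |(ξ : ℝ)| * ‖v ξ‖ := by
  have hphase : -2 * Complex.I * t * (‖u₀ ξ‖ ^ 2 : ℝ) / (ξ : ℂ)
      = Complex.I * ((-2 * t * ‖u₀ ξ‖ ^ 2 / ξ : ℝ) : ℂ) := by
    push_cast; ring
  have hexp := Real.norm_exp_I_mul_ofReal_sub_one_le (x := -2 * t * ‖u₀ ξ‖ ^ 2 / ξ)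
  rw [← hphase, Real.norm_eq_abs, abs_div, abs_mul, abs_mul, abs_neg, abs_two,
    abs_of_nonneg (sq_nonneg ‖u₀ ξ‖)] at hexp
  rw [phaseShift, if_neg hξ, ← sub_one_mul, norm_mul]
  gcongr

lemma jap_rpow_mul_norm_phaseShift_sub_le (s α t : ℝ) (u₀ v : ℤ → ℂ)
    (hu : Summable fun ξ : ℤ => jap (ξ : ℝ) ^ (2 * (-s)) * ‖u₀ ξ‖ ^ 2) (ξ : ℤ) :
    jap ξ ^ (α + 1 - 2 * s) * ‖phaseShift t u₀ v ξ - v ξ‖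
      ≤ 4 * |t| * Hnorm (-s) u₀ ^ 2 * (jap ξ ^ α * ‖v ξ‖) := by
  rcases eq_or_ne ξ 0 with rfl | hξ
  · simp only [phaseShift, if_pos, sub_self, norm_zero, mul_zero]
    exact mul_nonneg (by positivity) (mul_nonneg (Real.rpow_nonneg (jap_pos _).le _) (norm_nonneg _))
  set J := jap ξ
  set M := Hnorm (-s) u₀ ^ 2
  have hJ : 0 < J := jap_pos _
  have hcoef : ‖u₀ ξ‖ ^ 2 ≤ J ^ (2 * s) * M := by
    have := jap_rpow_mul_sq_norm_le_Hnorm_sq hu ξ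
    rwa [mul_neg, Real.rpow_neg hJ.le, inv_mul_le_iff₀ (Real.rpow_pos_of_pos hJ _)] at this
  have hfreq : 1 / |(ξ : ℝ)| ≤ 2 / J := by
    rw [div_le_div_iff₀ (by positivity) hJ]; linarith [jap_le_two_mul_abs_intCast hξ]
  have hweight : J ^ (α + 1 - 2 * s) * J ^ (2 * s) = J ^ α * J := by
    rw [← Real.rpow_add hJ, ← Real.rpow_add_one hJ.ne']; ring_nf
  calc J ^ (α + 1 - 2 * s) * ‖phaseShift t u₀ v ξ - v ξ‖
      ≤ J ^ (α + 1 - 2 * s) * (2 * |t| * ‖u₀ ξ‖ ^ 2 * (1 / |(ξ : ℝ)|) * ‖v ξ‖) := by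
        rw [mul_one_div]; gcongr; exact norm_phaseShift_sub_le t u₀ v hξ
    _ ≤ J ^ (α + 1 - 2 * s) * (2 * |t| * (J ^ (2 * s) * M) * (2 / J) * ‖v ξ‖) := by
        gcongr
    _ = 4 * |t| * M * (J ^ α * ‖v ξ‖) := by
        field_simp
        linear_combination (4 * |t| * M * ‖v ξ‖) * hweight

theorem phase_shift_smoothing :
    ∃ C : ℝ, 0 < C ∧ ∀ (s α t : ℝ), 0 ≤ s → ∀ u₀ v : ℤ → ℂ,
      u₀ 0 = 0 →
      Summable (fun ξ : ℤ => jap (ξ : ℝ) ^ (2 * (-s)) * ‖u₀ ξ‖ ^ 2) →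
      Summable (fun ξ : ℤ => jap (ξ : ℝ) ^ (2 * α) * ‖v ξ‖ ^ 2) →
      Hnorm (α + 1 - 2 * s)
          (fun ξ : ℤ =>
            (if ξ = 0 then v 0
              else Complex.exp (-2 * Complex.I * t * (‖u₀ ξ‖ ^ 2 : ℝ) / (ξ : ℂ)) * v ξ)
              - v ξ) ≤
        C * |t| * Hnorm (-s) u₀ ^ 2 * Hnorm α v := by
  exact ⟨4, by norm_num, fun s α t _ u₀ v _ hu hv =>
    Hnorm_le_mul_Hnorm (by positivity) hv (jap_rpow_mul_norm_phaseShift_sub_le s α t u₀ v hu)⟩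
end

section
/- Let s < 1/2, γ ∈ ℝ, N > 0, T > 0. There exists a constant C = C(N, T) such that for all f, g ∈ L²(T) with f̂(0)=ĝ(0)=0, ‖f‖_{L²} + ‖g‖_{L²} < N, and f − g ∈ H^γ(T), the resonant operators satisfy sup_{t∈[0,T]} ‖R[f](t) − R[g](t)‖_{H^γ(T)} ≤ C ‖f − g‖_{H^γ(T)}. -/
noncomputable def Rop (s : ℝ) (f : ℤ → ℂ) (t : ℝ) (ξ : ℤ) : ℂ :=
  if ξ = 0 then 0
  else f ξ * Complex.exp (2 * Complex.I * ((jap (ξ : ℝ) ^ (2 * s) / (ξ : ℝ)) *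
      ‖f ξ‖ ^ 2 * t : ℝ)) * Complex.exp (Complex.I * ((ξ : ℝ) ^ 3 * t : ℝ))

/-!
`R[f]` acts on each Fourier mode separately, by the gauge rotation `a ↦ a e^{iκ|a|²}` with
`κ = 2⟨ξ⟩^{2s} t / ξ` followed by the linear phase `e^{iξ³t}`. The gauge rotation is Lipschitz
on the ball of radius `N`, with constant `1 + |κ| N²`, and `s ≤ 1/2` makes `|κ| ≤ 4t` uniformly
in `ξ`. Since `|f̂(ξ)| ≤ ‖f‖_{L²}`, this gives the pointwise bound
`|R[f]^(t,ξ) - R[g]^(t,ξ)| ≤ (1 + 4TN²) |f̂(ξ) - ĝ(ξ)|`, which is then summed against any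
Sobolev weight.
-/

open Complex

lemma norm_exp_I_mul_ofReal_sub_exp_I_mul_ofReal_le (x y : ℝ) :
    ‖exp (I * x) - exp (I * y)‖ ≤ |x - y| := by
  have hfactor : exp (I * x) - exp (I * y) = exp (I * y) * (exp (I * ↑(x - y)) - 1) := by
    rw [mul_sub, mul_one, ← exp_add]
    push_cast
    ring_nf
  rw [hfactor, norm_mul, norm_exp_I_mul_ofReal, one_mul]
  exact Real.norm_exp_I_mul_ofReal_sub_one_le

lemma norm_mul_exp_phase_sub_le (κ : ℝ) (a b : ℂ) :
    ‖a * exp (I * ↑(κ * ‖a‖ ^ 2)) - b * exp (I * ↑(κ * ‖b‖ ^ 2))‖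
      ≤ (1 + |κ| * ‖b‖ * (‖a‖ + ‖b‖)) * ‖a - b‖ := by
  have hnorm_sq : |‖a‖ ^ 2 - ‖b‖ ^ 2| ≤ ‖a - b‖ * (‖a‖ + ‖b‖) := by
    rw [sq_sub_sq, abs_mul, abs_of_nonneg (by positivity : 0 ≤ ‖a‖ + ‖b‖), mul_comm]
    gcongr
    exact abs_norm_sub_norm_le a b
  have hphase : |κ * ‖a‖ ^ 2 - κ * ‖b‖ ^ 2| ≤ |κ| * (‖a - b‖ * (‖a‖ + ‖b‖)) := by
    rw [← mul_sub, abs_mul]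
    gcongr
  calc ‖a * exp (I * ↑(κ * ‖a‖ ^ 2)) - b * exp (I * ↑(κ * ‖b‖ ^ 2))‖
      = ‖(a - b) * exp (I * ↑(κ * ‖a‖ ^ 2))
          + b * (exp (I * ↑(κ * ‖a‖ ^ 2)) - exp (I * ↑(κ * ‖b‖ ^ 2)))‖ := by ring_nf
    _ ≤ ‖a - b‖ + ‖b‖ * |κ * ‖a‖ ^ 2 - κ * ‖b‖ ^ 2| := by
      refine (norm_add_le _ _).trans ?_
      rw [norm_mul, norm_mul, norm_exp_I_mul_ofReal, mul_one]
      gcongr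
      exact norm_exp_I_mul_ofReal_sub_exp_I_mul_ofReal_le _ _
    _ ≤ ‖a - b‖ + ‖b‖ * (|κ| * (‖a - b‖ * (‖a‖ + ‖b‖))) := by gcongr
    _ = (1 + |κ| * ‖b‖ * (‖a‖ + ‖b‖)) * ‖a - b‖ := by ring

lemma jap_rpow_le_two_mul_abs {x : ℝ} (hx : 1 ≤ |x|) {p : ℝ} (hp : p ≤ 1) :
    jap x ^ p ≤ 2 * |x| := by
  have hjap : 1 ≤ jap x := by unfold jap; linarith [abs_nonneg x]
  calc jap x ^ p ≤ jap x ^ (1 : ℝ) := Real.rpow_le_rpow_of_exponent_le hjap hp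
    _ = 1 + |x| := Real.rpow_one _
    _ ≤ 2 * |x| := by linarith

lemma Rop_of_ne_zero (s : ℝ) (f : ℤ → ℂ) (t : ℝ) {ξ : ℤ} (hξ : ξ ≠ 0) :
    Rop s f t ξ = exp (I * (((ξ : ℝ) ^ 3 * t : ℝ) : ℂ)) *
      (f ξ * exp (I * ((2 * (jap ξ ^ (2 * s) / ξ) * t * ‖f ξ‖ ^ 2 : ℝ) : ℂ))) := by
  simp only [Rop, if_neg hξ]
  push_cast
  ring_nf

lemma norm_Rop_sub_Rop_le {s t T N : ℝ} (hs : s ≤ 1 / 2) (ht : t ∈ Set.Icc 0 T)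
    {f g : ℤ → ℂ} {ξ : ℤ} (hfg : ‖f ξ‖ + ‖g ξ‖ ≤ N) :
    ‖Rop s f t ξ - Rop s g t ξ‖ ≤ (1 + 4 * T * N ^ 2) * ‖f ξ - g ξ‖ := by
  obtain ⟨ht0, htT⟩ := ht
  have hT : 0 ≤ T := ht0.trans htT
  rcases eq_or_ne ξ 0 with rfl | hξ
  · simp only [Rop, if_pos, sub_self, norm_zero]
    positivity
  set κ := 2 * (jap ξ ^ (2 * s) / ξ) * t
  have hξ_abs : (1 : ℝ) ≤ |(ξ : ℝ)| := by exact_mod_cast Int.one_le_abs hξ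
  have hκ : |κ| ≤ 4 * T := by
    have hw : jap ξ ^ (2 * s) / |(ξ : ℝ)| ≤ 2 := by
      rw [div_le_iff₀ (by linarith)]
      exact jap_rpow_le_two_mul_abs hξ_abs (by linarith)
    have hw0 : 0 ≤ jap ξ ^ (2 * s) := Real.rpow_nonneg (by unfold jap; positivity) _
    calc |κ| = 2 * (jap ξ ^ (2 * s) / |(ξ : ℝ)|) * t := by
          simp only [κ, abs_mul, abs_div, abs_of_nonneg hw0, abs_of_nonneg ht0, abs_two]
      _ ≤ 2 * 2 * T := by gcongr
      _ = 4 * T := by ring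
  have hg : ‖g ξ‖ ≤ N := by linarith [norm_nonneg (f ξ)]
  rw [Rop_of_ne_zero s f t hξ, Rop_of_ne_zero s g t hξ, ← mul_sub, norm_mul,
    norm_exp_I_mul_ofReal, one_mul]
  refine (norm_mul_exp_phase_sub_le κ (f ξ) (g ξ)).trans
    (mul_le_mul_of_nonneg_right ?_ (norm_nonneg _))
  have hN : 0 ≤ N := (norm_nonneg _).trans hg
  calc 1 + |κ| * ‖g ξ‖ * (‖f ξ‖ + ‖g ξ‖) ≤ 1 + 4 * T * N * N := by gcongr
    _ = 1 + 4 * T * N ^ 2 := by ring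

lemma norm_le_Hnorm_zero {f : ℤ → ℂ} (hf : Summable fun ξ : ℤ => ‖f ξ‖ ^ 2) (ξ : ℤ) :
    ‖f ξ‖ ≤ Hnorm 0 f := by
  have hHnorm : Hnorm 0 f = Real.sqrt (∑' ξ : ℤ, ‖f ξ‖ ^ 2) := by simp [Hnorm]
  rw [hHnorm, ← Real.sqrt_sq (norm_nonneg (f ξ))]
  exact Real.sqrt_le_sqrt (hf.le_tsum ξ fun _ _ => sq_nonneg _)

lemma Hnorm_le_mul_of_norm_le {σ C : ℝ} (hC : 0 ≤ C) {a b : ℤ → ℂ}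
    (hab : ∀ ξ, ‖a ξ‖ ≤ C * ‖b ξ‖)
    (hb : Summable fun ξ : ℤ => jap ξ ^ (2 * σ) * ‖b ξ‖ ^ 2) :
    Hnorm σ a ≤ C * Hnorm σ b := by
  have hweight (ξ : ℤ) : 0 ≤ jap ξ ^ (2 * σ) := Real.rpow_nonneg (by unfold jap; positivity) _
  have hterm (ξ : ℤ) :
      jap ξ ^ (2 * σ) * ‖a ξ‖ ^ 2 ≤ C ^ 2 * (jap ξ ^ (2 * σ) * ‖b ξ‖ ^ 2) := by
    calc jap ξ ^ (2 * σ) * ‖a ξ‖ ^ 2 ≤ jap ξ ^ (2 * σ) * (C * ‖b ξ‖) ^ 2 :=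
          mul_le_mul_of_nonneg_left (pow_le_pow_left₀ (norm_nonneg _) (hab ξ) 2) (hweight ξ)
      _ = C ^ 2 * (jap ξ ^ (2 * σ) * ‖b ξ‖ ^ 2) := by ring
  have hCb := hb.mul_left (C ^ 2)
  have ha : Summable fun ξ : ℤ => jap ξ ^ (2 * σ) * ‖a ξ‖ ^ 2 :=
    hCb.of_nonneg_of_le (fun ξ => mul_nonneg (hweight ξ) (sq_nonneg _)) hterm
  calc Hnorm σ a ≤ Real.sqrt (C ^ 2 * ∑' ξ : ℤ, jap ξ ^ (2 * σ) * ‖b ξ‖ ^ 2) := by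
        rw [← tsum_mul_left]
        exact Real.sqrt_le_sqrt (ha.tsum_le_tsum hterm hCb)
    _ = C * Hnorm σ b := by rw [Real.sqrt_mul (sq_nonneg C), Real.sqrt_sq hC, Hnorm]

theorem resonant_operator_lipschitz_general
    (s γ N T : ℝ) (hs : s < 1 / 2) (hT : 0 < T) :
    ∃ C : ℝ, 0 < C ∧ ∀ f g : ℤ → ℂ,
      f 0 = 0 → g 0 = 0 →
      Summable (fun ξ : ℤ => ‖f ξ‖ ^ 2) →
      Summable (fun ξ : ℤ => ‖g ξ‖ ^ 2) →
      Hnorm 0 f + Hnorm 0 g < N →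
      Summable (fun ξ : ℤ => jap (ξ : ℝ) ^ (2 * γ) * ‖f ξ - g ξ‖ ^ 2) →
      ∀ t ∈ Set.Icc (0 : ℝ) T,
        Hnorm γ (fun ξ => Rop s f t ξ - Rop s g t ξ) ≤
          C * Hnorm γ (fun ξ => f ξ - g ξ) := by
  refine ⟨1 + 4 * T * N ^ 2, by positivity, ?_⟩
  intro f g _ _ hf hg hfg hfg_γ t ht
  refine Hnorm_le_mul_of_norm_le (by positivity) (fun ξ => ?_) hfg_γ
  exact norm_Rop_sub_Rop_le hs.le ht
    (by linarith [norm_le_Hnorm_zero hf ξ, norm_le_Hnorm_zero hg ξ])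

theorem resonant_operator_lipschitz
    (s γ N T : ℝ) (hs : s < 1 / 2) (hN : 0 < N) (hT : 0 < T) :
    ∃ C : ℝ, 0 < C ∧ ∀ f g : ℤ → ℂ,
      f 0 = 0 → g 0 = 0 →
      Summable (fun ξ : ℤ => ‖f ξ‖ ^ 2) →
      Summable (fun ξ : ℤ => ‖g ξ‖ ^ 2) →
      Hnorm 0 f + Hnorm 0 g < N →
      Summable (fun ξ : ℤ => jap (ξ : ℝ) ^ (2 * γ) * ‖f ξ - g ξ‖ ^ 2) →
      ∀ t ∈ Set.Icc (0 : ℝ) T,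
        Hnorm γ (fun ξ => Rop s f t ξ - Rop s g t ξ) ≤
          C * Hnorm γ (fun ξ => f ξ - g ξ) :=
  resonant_operator_lipschitz_general s γ N T hs hT
end

section
/- Let 0 ≤ s < 1/2, 0 < δ with 10δ < 1 − 2s, and 0 < γ ≤ 1. Then there is a constant C such that for all nonzero integers ξ, ξ₁, ξ₂, ξ₃ with ξ₁+ξ₂+ξ₃ = ξ and (ξ₁+ξ₂)(ξ₂+ξ₃)(ξ₃+ξ₁) ≠ 0: ⟨ξ₁⟩^{3s−1+δ} ⟨ξ₂⟩^{s+δ} ⟨ξ⟩^{γ−s} / (⟨ξ₃⟩^{1−s−δ} |ξ₁+ξ₂|^{3/2−2δ} |ξ₂+ξ₃|^{3/2−2δ} |ξ₃+ξ₁|^{3/2−2δ}) ≤ C, where ⟨x⟩ = 1+|x|. -/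
lemma rpow_le_rpow_posPart {x M : ℝ} (e : ℝ) (hx : 1 ≤ x) (hxM : x ≤ M) : x ^ e ≤ M ^ e⁺ := by
  rcases le_total e 0 with he | he
  · rw [posPart_eq_zero.mpr he, Real.rpow_zero]
    exact Real.rpow_le_one_of_one_le_of_nonpos hx he
  · rw [posPart_eq_self.mpr he]
    exact Real.rpow_le_rpow (by linarith) hxM he

lemma rpow_mul_rpow_mul_rpow_le {u v w M e₁ e₂ e₃ q : ℝ} (hu : 1 ≤ u) (hv : 1 ≤ v) (hw : 1 ≤ w)
    (huM : u ≤ M) (hvM : v ≤ M) (hwM : w ≤ M) (he : e₁⁺ + e₂⁺ + e₃⁺ ≤ q) :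
    u ^ e₁ * v ^ e₂ * w ^ e₃ ≤ M ^ q := by
  have hM : 1 ≤ M := hu.trans huM
  calc u ^ e₁ * v ^ e₂ * w ^ e₃ ≤ M ^ e₁⁺ * M ^ e₂⁺ * M ^ e₃⁺ := by
        gcongr
        · exact rpow_le_rpow_posPart e₁ hu huM
        · exact rpow_le_rpow_posPart e₂ hv hvM
        · exact rpow_le_rpow_posPart e₃ hw hwM
    _ = M ^ (e₁⁺ + e₂⁺ + e₃⁺) := by rw [Real.rpow_add (by linarith), Real.rpow_add (by linarith)]
    _ ≤ M ^ q := Real.rpow_le_rpow_of_exponent_le hM he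

lemma abs_add_abs_add_abs_le_three_mul {a b c : ℝ} (ha : 1 ≤ |a|) (hb : 1 ≤ |b|) (hc : 1 ≤ |c|) :
    |a| + |b| + |c| ≤ 3 * (|a| * |b| * |c|) := by
  nlinarith [mul_le_mul ha hb zero_le_one (abs_nonneg a),
    mul_le_mul hb hc zero_le_one (abs_nonneg b), mul_le_mul ha hc zero_le_one (abs_nonneg a)]

lemma two_mul_abs_le_of_two_mul_eq {x a b c : ℝ} (h : 2 * x = a + b + c) :
    2 * |x| ≤ |a| + |b| + |c| :=
  calc 2 * |x| = |a + b + c| := by rw [← h, abs_mul, abs_two]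
    _ ≤ |a + b| + |c| := abs_add_le _ _
    _ ≤ |a| + |b| + |c| := by gcongr; exact abs_add_le a b

lemma jap_le_of_two_mul_abs_le {x a b c : ℝ} (ha : 1 ≤ |a|) (hb : 1 ≤ |b|) (hc : 1 ≤ |c|)
    (hx : 2 * |x| ≤ |a| + |b| + |c|) : jap x ≤ 3 * (|a| * |b| * |c|) := by
  have hP : 1 ≤ |a| * |b| * |c| :=
    one_le_mul_of_one_le_of_one_le (one_le_mul_of_one_le_of_one_le ha hb) hc
  have := abs_add_abs_add_abs_le_three_mul ha hb hc
  unfold jap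
  linarith

lemma multiplier_exponents_posPart_sum_le {s δ γ : ℝ} (hs0 : 0 ≤ s) (hδ : 0 < δ)
    (hδs : 10 * δ < 1 - 2 * s) (hγ : γ ≤ 1) :
    (3 * s - 1 + δ)⁺ + (s + δ)⁺ + (γ - s)⁺ ≤ 3 / 2 - 2 * δ := by
  simp only [posPart_def, max_def]
  split_ifs <;> linarith

theorem jap_multiplier_le_nine {s δ γ : ℝ} (hs0 : 0 ≤ s) (hδ : 0 < δ) (hδs : 10 * δ < 1 - 2 * s)
    (hγ : γ ≤ 1) {x₁ x₂ x₃ : ℝ} (h₁₂ : 1 ≤ |x₁ + x₂|) (h₂₃ : 1 ≤ |x₂ + x₃|)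
    (h₃₁ : 1 ≤ |x₃ + x₁|) :
    jap x₁ ^ (3 * s - 1 + δ) * jap x₂ ^ (s + δ) * jap (x₁ + x₂ + x₃) ^ (γ - s) /
      (jap x₃ ^ (1 - s - δ) * |x₁ + x₂| ^ (3 / 2 - 2 * δ) * |x₂ + x₃| ^ (3 / 2 - 2 * δ) *
        |x₃ + x₁| ^ (3 / 2 - 2 * δ)) ≤ 9 := by
  set q := 3 / 2 - 2 * δ with hq
  set P := |x₁ + x₂| * |x₂ + x₃| * |x₃ + x₁|
  have hP : 1 ≤ P :=
    one_le_mul_of_one_le_of_one_le (one_le_mul_of_one_le_of_one_le h₁₂ h₂₃) h₃₁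
  have hj₁ : jap x₁ ≤ 3 * P := jap_le_of_two_mul_abs_le h₁₂ h₂₃ h₃₁ <| by
    simpa only [abs_neg] using two_mul_abs_le_of_two_mul_eq
      (show 2 * x₁ = (x₁ + x₂) + -(x₂ + x₃) + (x₃ + x₁) by ring)
  have hj₂ : jap x₂ ≤ 3 * P := jap_le_of_two_mul_abs_le h₁₂ h₂₃ h₃₁ <| by
    simpa only [abs_neg] using two_mul_abs_le_of_two_mul_eq
      (show 2 * x₂ = (x₁ + x₂) + (x₂ + x₃) + -(x₃ + x₁) by ring)
  have hj : jap (x₁ + x₂ + x₃) ≤ 3 * P := jap_le_of_two_mul_abs_le h₁₂ h₂₃ h₃₁ <|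
    two_mul_abs_le_of_two_mul_eq (by ring)
  have hnum : jap x₁ ^ (3 * s - 1 + δ) * jap x₂ ^ (s + δ) * jap (x₁ + x₂ + x₃) ^ (γ - s)
      ≤ (3 * P) ^ q :=
    rpow_mul_rpow_mul_rpow_le (one_le_jap _) (one_le_jap _) (one_le_jap _) hj₁ hj₂ hj
      (multiplier_exponents_posPart_sum_le hs0 hδ hδs hγ)
  have hden : P ^ q ≤ jap x₃ ^ (1 - s - δ) * |x₁ + x₂| ^ q * |x₂ + x₃| ^ q * |x₃ + x₁| ^ q := by
    rw [mul_assoc (jap x₃ ^ _), mul_assoc (jap x₃ ^ _),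
      ← Real.mul_rpow (abs_nonneg _) (abs_nonneg _), ← Real.mul_rpow (by positivity) (abs_nonneg _)]
    exact le_mul_of_one_le_left (by positivity) (Real.one_le_rpow (one_le_jap _) (by linarith))
  have h3q : (3 : ℝ) ^ q ≤ 9 := by
    calc (3 : ℝ) ^ q ≤ 3 ^ (2 : ℝ) := Real.rpow_le_rpow_of_exponent_le (by norm_num) (by linarith)
      _ = 9 := by norm_num
  rw [div_le_iff₀ ((Real.rpow_pos_of_pos (by linarith) q).trans_le hden)]
  calc _ ≤ (3 * P) ^ q := hnum
    _ = 3 ^ q * P ^ q := Real.mul_rpow (by norm_num) (by positivity)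
    _ ≤ 9 * P ^ q := by gcongr
    _ ≤ 9 * _ := by gcongr

theorem quintilinear_multiplier_bound_general
    (s δ γ : ℝ) (hs0 : 0 ≤ s) (hδ : 0 < δ)
    (hδs : 10 * δ < 1 - 2 * s) (hγ : γ ≤ 1) :
    ∃ C : ℝ, ∀ ξ ξ₁ ξ₂ ξ₃ : ℤ, ξ ≠ 0 → ξ₁ ≠ 0 → ξ₂ ≠ 0 → ξ₃ ≠ 0 →
      ξ₁ + ξ₂ + ξ₃ = ξ → (ξ₁ + ξ₂) * (ξ₂ + ξ₃) * (ξ₃ + ξ₁) ≠ 0 →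
      jap (ξ₁ : ℝ) ^ (3 * s - 1 + δ) * jap (ξ₂ : ℝ) ^ (s + δ) * jap (ξ : ℝ) ^ (γ - s) /
        (jap (ξ₃ : ℝ) ^ (1 - s - δ) * |(ξ₁ : ℝ) + ξ₂| ^ (3 / 2 - 2 * δ) *
          |(ξ₂ : ℝ) + ξ₃| ^ (3 / 2 - 2 * δ) * |(ξ₃ : ℝ) + ξ₁| ^ (3 / 2 - 2 * δ)) ≤ C := by
  refine ⟨9, fun ξ ξ₁ ξ₂ ξ₃ _ _ _ _ hsum hne => ?_⟩
  obtain ⟨⟨h₁₂, h₂₃⟩, h₃₁⟩ := by simpa only [mul_ne_zero_iff] using hne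
  subst hsum
  simpa only [Int.cast_add] using jap_multiplier_le_nine hs0 hδ hδs hγ
    (by exact_mod_cast Int.one_le_abs h₁₂) (by exact_mod_cast Int.one_le_abs h₂₃)
    (by exact_mod_cast Int.one_le_abs h₃₁)

theorem quintilinear_multiplier_bound
    (s δ γ : ℝ) (hs0 : 0 ≤ s) (hs : s < 1 / 2) (hδ : 0 < δ)
    (hδs : 10 * δ < 1 - 2 * s) (hγ0 : 0 < γ) (hγ : γ ≤ 1) :
    ∃ C : ℝ, ∀ ξ ξ₁ ξ₂ ξ₃ : ℤ, ξ ≠ 0 → ξ₁ ≠ 0 → ξ₂ ≠ 0 → ξ₃ ≠ 0 →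
      ξ₁ + ξ₂ + ξ₃ = ξ → (ξ₁ + ξ₂) * (ξ₂ + ξ₃) * (ξ₃ + ξ₁) ≠ 0 →
      jap (ξ₁ : ℝ) ^ (3 * s - 1 + δ) * jap (ξ₂ : ℝ) ^ (s + δ) * jap (ξ : ℝ) ^ (γ - s) /
        (jap (ξ₃ : ℝ) ^ (1 - s - δ) * |(ξ₁ : ℝ) + ξ₂| ^ (3 / 2 - 2 * δ) *
          |(ξ₂ : ℝ) + ξ₃| ^ (3 / 2 - 2 * δ) * |(ξ₃ : ℝ) + ξ₁| ^ (3 / 2 - 2 * δ)) ≤ C :=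
  quintilinear_multiplier_bound_general s δ γ hs0 hδ hδs hγ
end
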